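/- Let d ≥ 1, let H ∈ M_d(ℝ) be symmetric and invertible and let M ∈ M_d(ℝ) be symmetric positive definite. Consider the real (4d)×(4d) block matrix F = [[0, I, 0, 0],[−H, 0, 0, 2M],[0, 0, 0, H],[0, (1/2)M, −I, 0]] (acting on vectors (x,v,ξ,η) ∈ (ℝ^d)^4 by F(x,v,ξ,η) = (v, −Hx + 2Mη, Hη, (1/2)Mv − ξ)). Then: (i) if (x,v,ξ,η) ∈ (ℂ^d)^4 is an eigenvector of F with eigenvalue λ, then (−x,v,ξ,−η) is an eigenvector of F with eigenvalue −λ, so the spectrum of F is centrally symmetric with respect to the origin; (ii) F has no eigenvalue (over ℂ) on the imaginary axis; (iii) F has exactly 2d eigenvalues, counted with algebraic multiplicity, in {Re z > 0} and exactly 2d in {Re z < 0}. -/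

import Mathlib

/-!
Conjugation by `S = diag(-I, I, I, -I)` sends `F` to `-F`. This gives (i), and makes `F` similar
to `-F`, so the roots of its characteristic polynomial are symmetric under `z ↦ -z`.

If `(x, v, ξ, η)` is an eigenvector for `z`, then `(H + z²) x = 2 M η` and
`(H + z²) η = (z² / 2) M x`, so `u± = z x ± 2 η` solve `(H + z²) u± = ± z M u±`. For `z ≠ 0` on
the imaginary axis, pairing with `u±` gives a real left side and a purely imaginary right side
`± z ⟨u±, M u±⟩`, which forces `u± = 0`; for `z = 0` the invertibility of `H` does the same job.
So no root lies on the imaginary axis, and the `4d` roots split evenly between the half-planes.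
-/

open Matrix Polynomial ComplexOrder

theorem Sum.smul_elim {R α β M : Type*} [SMul R M] (c : R) (f : α → M) (g : β → M) :
    c • Sum.elim f g = Sum.elim (c • f) (c • g) := by
  ext (a | b) <;> rfl

namespace Multiset

theorem card_filter_re_neg_eq_card_filter_re_pos {s : Multiset ℂ} (hs : s.map Neg.neg = s) :
    (s.filter fun z => z.re < 0).card = (s.filter fun z => 0 < z.re).card := by
  conv_lhs => rw [← hs]
  rw [filter_map, card_map]
  congr 1
  exact filter_congr fun z _ => by simp

theorem card_filter_re_pos_add_card_filter_re_neg {s : Multiset ℂ} (hs : ∀ z ∈ s, z.re ≠ 0) :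
    (s.filter fun z => 0 < z.re).card + (s.filter fun z => z.re < 0).card = s.card := by
  conv_rhs => rw [← filter_add_not (fun z : ℂ => 0 < z.re) s]
  rw [card_add]
  congr 2
  exact filter_congr fun z hz => by rw [not_lt]; exact ⟨le_of_lt, fun h => h.lt_of_ne (hs z hz)⟩

end Multiset

namespace Matrix

section CommRing

variable {n R : Type*} [Fintype n] [CommRing R]

theorem mulVec_mulVec_eq_neg_smul_of_mul_eq_neg_mul {S A : Matrix n n R}
    (hSA : A * S = -(S * A)) {c : R} {w : n → R} (hw : A *ᵥ w = c • w) :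
    A *ᵥ (S *ᵥ w) = (-c) • (S *ᵥ w) := by
  rw [mulVec_mulVec, hSA, neg_mulVec, ← mulVec_mulVec, hw, mulVec_smul, neg_smul]

variable [DecidableEq n]

theorem charpoly_neg (A : Matrix n n R) :
    (-A).charpoly = (-1) ^ Fintype.card n * A.charpoly.comp (-X) := by
  have hchar : charmatrix (-A) = -(charmatrix A).map (compRingHom (-X)) := by
    ext i j : 1
    by_cases h : i = j <;> simp [h, compRingHom, add_comm]
  rw [charpoly, hchar, det_neg, charpoly]
  exact congrArg _ (RingHom.map_det (compRingHom (-X : R[X])) A.charmatrix).symm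

theorem roots_charpoly_neg [IsDomain R] (A : Matrix n n R) :
    (-A).charpoly.roots = A.charpoly.roots.map Neg.neg := by
  rw [charpoly_neg]
  rcases neg_one_pow_eq_or R[X] (Fintype.card n) with h | h <;>
    simp [h, roots_comp_neg_X, roots_neg]

theorem charpoly_neg_of_mul_eq_neg_mul {S A : Matrix n n R} (hS : S * S = 1)
    (hSA : A * S = -(S * A)) : (-A).charpoly = A.charpoly := by
  have : -A = S * (A * S) := by
    rw [hSA, mul_neg, ← mul_assoc, hS, one_mul]
  rw [this, charpoly_mul_comm, mul_assoc, hS, mul_one]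

end CommRing

section Field

variable {n K : Type*} [DecidableEq n] [Field K]

theorem exists_mulVec_eq_smul_of_isRoot_charpoly [Fintype n] {A : Matrix n n K} {z : K}
    (hz : A.charpoly.IsRoot z) : ∃ w ≠ 0, A *ᵥ w = z • w := by
  rw [IsRoot, eval_charpoly] at hz
  obtain ⟨w, hw, hzw⟩ := exists_mulVec_eq_zero_iff.mpr hz
  refine ⟨w, hw, ?_⟩
  rw [sub_mulVec, sub_eq_zero] at hzw
  rw [← hzw]
  ext i
  simp [mulVec_diagonal]

def blockF (H M : Matrix n n K) : Matrix ((n ⊕ n) ⊕ (n ⊕ n)) ((n ⊕ n) ⊕ (n ⊕ n)) K :=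
  fromBlocks (fromBlocks 0 1 (-H) 0) (fromBlocks 0 0 0 ((2 : K) • M))
    (fromBlocks 0 0 0 ((1 / 2 : K) • M)) (fromBlocks 0 H (-1) 0)

def signFlip : Matrix ((n ⊕ n) ⊕ (n ⊕ n)) ((n ⊕ n) ⊕ (n ⊕ n)) K :=
  fromBlocks (fromBlocks (-1) 0 0 1) 0 0 (fromBlocks 1 0 0 (-1))

theorem blockF_map {L : Type*} [Field L] (f : K →+* L) (H M : Matrix n n K) :
    (blockF H M).map f = blockF (H.map f) (M.map f) := by
  simp [blockF, fromBlocks_map, Matrix.map_neg _ (map_neg f), Matrix.map_smul' _ _ _ (map_mul f),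
    Matrix.map_one _ (map_zero f) (map_one f), map_ofNat]

variable [Fintype n]

theorem signFlip_mul_self : (signFlip : Matrix ((n ⊕ n) ⊕ (n ⊕ n)) _ K) * signFlip = 1 := by
  simp [signFlip, fromBlocks_multiply, fromBlocks_one]

theorem blockF_mul_signFlip (H M : Matrix n n K) :
    blockF H M * signFlip = -(signFlip * blockF H M) := by
  simp [blockF, signFlip, fromBlocks_multiply, fromBlocks_neg]

theorem signFlip_mulVec (w : (n ⊕ n) ⊕ (n ⊕ n) → K) :
    signFlip *ᵥ w = Sum.elim
      (Sum.elim (fun j => -(w (Sum.inl (Sum.inl j)))) (fun j => w (Sum.inl (Sum.inr j))))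
      (Sum.elim (fun j => w (Sum.inr (Sum.inl j))) (fun j => -(w (Sum.inr (Sum.inr j))))) := by
  ext ((j | j) | (j | j)) <;> simp [signFlip, mulVec, dotProduct, fromBlocks, one_apply]

theorem blockF_mulVec (H M : Matrix n n K) (x v ξ η : n → K) :
    blockF H M *ᵥ Sum.elim (Sum.elim x v) (Sum.elim ξ η) =
      Sum.elim (Sum.elim v (-(H *ᵥ x) + (2 : K) • M *ᵥ η))
        (Sum.elim (H *ᵥ η) ((1 / 2 : K) • M *ᵥ v - ξ)) := by
  ext ((j | j) | (j | j)) <;>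
    simp [blockF, fromBlocks_mulVec, neg_mulVec, smul_mulVec, sub_eq_add_neg]

theorem blockF_mulVec_eq_smul_iff (H M : Matrix n n K) (x v ξ η : n → K) (z : K) :
    blockF H M *ᵥ Sum.elim (Sum.elim x v) (Sum.elim ξ η) =
        z • Sum.elim (Sum.elim x v) (Sum.elim ξ η) ↔
      v = z • x ∧ -(H *ᵥ x) + (2 : K) • M *ᵥ η = z • v ∧ H *ᵥ η = z • ξ ∧
        (1 / 2 : K) • M *ᵥ v - ξ = z • η := by
  simp only [blockF_mulVec, Sum.smul_elim, Sum.elim_eq_iff, and_assoc]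

theorem blockF_eigen_equations {H M : Matrix n n K} {x v ξ η : n → K} {z : K}
    (h : blockF H M *ᵥ Sum.elim (Sum.elim x v) (Sum.elim ξ η) =
      z • Sum.elim (Sum.elim x v) (Sum.elim ξ η)) :
    H *ᵥ x + z ^ 2 • x = (2 : K) • M *ᵥ η ∧ H *ᵥ η + z ^ 2 • η = (z ^ 2 / 2) • M *ᵥ x := by
  obtain ⟨rfl, h2, h3, h4⟩ := (blockF_mulVec_eq_smul_iff H M x v ξ η z).mp h
  rw [mulVec_smul] at h4
  constructor
  · linear_combination (norm := module) -h2
  · linear_combination (norm := module) h3 - z • h4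

end Field

section Complex

variable {n : Type*}

theorem IsHermitian.map_ofReal {H : Matrix n n ℝ} (hH : H.IsHermitian) :
    (H.map ((↑) : ℝ → ℂ)).IsHermitian :=
  hH.map _ fun r => (Complex.conj_ofReal r).symm

variable [Fintype n]

theorem re_star_dotProduct_map_ofReal_mulVec (M : Matrix n n ℝ) (x : n → ℂ) :
    (star x ⬝ᵥ M.map ((↑) : ℝ → ℂ) *ᵥ x).re =
      (fun i => (x i).re) ⬝ᵥ M *ᵥ (fun i => (x i).re) +
        (fun i => (x i).im) ⬝ᵥ M *ᵥ (fun i => (x i).im) := by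
  simp only [dotProduct, mulVec, Complex.re_sum, Finset.mul_sum, ← Finset.sum_add_distrib]
  refine Finset.sum_congr rfl fun i _ => Finset.sum_congr rfl fun j _ => ?_
  simp only [Pi.star_apply, map_apply, Complex.star_def, Complex.mul_re, Complex.mul_im,
    Complex.conj_re, Complex.conj_im, Complex.ofReal_re, Complex.ofReal_im]
  ring

theorem PosDef.map_ofReal {M : Matrix n n ℝ} (hM : M.PosDef) :
    (M.map ((↑) : ℝ → ℂ)).PosDef := by
  have hherm := hM.isHermitian.map_ofReal
  refine PosDef.of_dotProduct_mulVec_pos hherm fun x hx => Complex.pos_iff.mpr ⟨?_, ?_⟩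
  · have hparts : (fun i => (x i).re) ≠ 0 ∨ (fun i => (x i).im) ≠ 0 := by
      by_contra! h
      exact hx (funext fun i => Complex.ext (congrFun h.1 i) (congrFun h.2 i))
    have hnonneg (y : n → ℝ) : 0 ≤ y ⬝ᵥ M *ᵥ y := by
      simpa using hM.posSemidef.dotProduct_mulVec_nonneg y
    rw [re_star_dotProduct_map_ofReal_mulVec]
    rcases hparts with h | h
    · exact add_pos_of_pos_of_nonneg (by simpa using hM.dotProduct_mulVec_pos h) (hnonneg _)
    · exact add_pos_of_nonneg_of_pos (hnonneg _) (by simpa using hM.dotProduct_mulVec_pos h)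
  · exact (hherm.im_star_dotProduct_mulVec_self x).symm

theorem eq_zero_of_mulVec_add_sq_smul_eq {H M : Matrix n n ℂ} (hH : H.IsHermitian)
    (hM : M.PosDef) {z : ℂ} (hz : z.re = 0) (hz0 : z ≠ 0) {u : n → ℂ}
    (h : H *ᵥ u + z ^ 2 • u = z • M *ᵥ u) : u = 0 := by
  by_contra hu
  have hMpos : 0 < (star u ⬝ᵥ M *ᵥ u).re := hM.re_dotProduct_pos hu
  have hMreal : (star u ⬝ᵥ M *ᵥ u).im = 0 := hM.isHermitian.im_star_dotProduct_mulVec_self u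
  have hHreal : (star u ⬝ᵥ H *ᵥ u).im = 0 := hH.im_star_dotProduct_mulVec_self u
  have hnormreal : (star u ⬝ᵥ u).im = 0 :=
    (Complex.nonneg_iff.mp (dotProduct_star_self_nonneg u)).2.symm
  have him := congrArg (fun y => (star u ⬝ᵥ y).im) h
  simp only [dotProduct_add, dotProduct_smul, smul_eq_mul, Complex.add_im, Complex.mul_im,
    sq, Complex.mul_re, hz, hMreal, hHreal, hnormreal] at him
  have hzim : z.im ≠ 0 := fun h0 => hz0 (Complex.ext hz h0)
  exact mul_ne_zero hzim hMpos.ne' (by linear_combination -him)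

variable [DecidableEq n]

theorem eq_zero_of_blockF_mulVec_eq_smul {H M : Matrix n n ℂ} (hH : H.IsHermitian)
    (hHinv : IsUnit H) (hM : M.PosDef) {z : ℂ} (hz : z.re = 0)
    {w : (n ⊕ n) ⊕ (n ⊕ n) → ℂ} (hw : blockF H M *ᵥ w = z • w) : w = 0 := by
  obtain ⟨x, v, ξ, η, rfl⟩ : ∃ x v ξ η, w = Sum.elim (Sum.elim x v) (Sum.elim ξ η) :=
    ⟨_, _, _, _, by ext ((j | j) | (j | j)) <;> rfl⟩
  obtain ⟨E1, E2⟩ := blockF_eigen_equations hw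
  obtain ⟨rfl, rfl⟩ : x = 0 ∧ η = 0 := by
    rcases eq_or_ne z 0 with rfl | hz0
    · have hH0 := mulVec_injective_of_isUnit hHinv
      have hη : η = 0 := hH0 (by simpa using E2)
      subst hη
      exact ⟨hH0 (by simpa using E1), rfl⟩
    have hplus := eq_zero_of_mulVec_add_sq_smul_eq hH hM hz hz0 (u := z • x + (2 : ℂ) • η) (by
      simp only [mulVec_add, mulVec_smul]
      linear_combination (norm := module) z • E1 + (2 : ℂ) • E2)
    have hminus := eq_zero_of_mulVec_add_sq_smul_eq hH hM (by simp [hz]) (neg_ne_zero.mpr hz0)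
      (u := z • x - (2 : ℂ) • η) (by
        simp only [mulVec_sub, mulVec_smul]
        linear_combination (norm := module) z • E1 - (2 : ℂ) • E2)
    have hx : z • x = 0 := by
      linear_combination (norm := module) (1 / 2 : ℂ) • hplus + (1 / 2 : ℂ) • hminus
    have hη : (2 : ℂ) • η = 0 := by
      linear_combination (norm := module) (1 / 2 : ℂ) • hplus - (1 / 2 : ℂ) • hminus
    exact ⟨(smul_eq_zero.mp hx).resolve_left hz0, (smul_eq_zero.mp hη).resolve_left two_ne_zero⟩
  obtain ⟨rfl, -, -, h4⟩ := (blockF_mulVec_eq_smul_iff H M 0 v ξ 0 z).mp hw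
  simp only [smul_zero, mulVec_zero, zero_sub, neg_eq_zero] at h4
  simp [h4]

end Complex

end Matrix

theorem stmt_2_general (d : ℕ)
    (H M : Matrix (Fin d) (Fin d) ℝ)
    (hHsymm : H.IsHermitian) (hHinv : IsUnit H) (hM : M.PosDef)
    (F : Matrix ((Fin d ⊕ Fin d) ⊕ (Fin d ⊕ Fin d)) ((Fin d ⊕ Fin d) ⊕ (Fin d ⊕ Fin d)) ℝ)
    (hF : F = Matrix.fromBlocks
      (Matrix.fromBlocks 0 1 (-H) 0)
      (Matrix.fromBlocks 0 0 0 ((2 : ℝ) • M))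
      (Matrix.fromBlocks 0 0 0 ((1/2 : ℝ) • M))
      (Matrix.fromBlocks 0 H (-1) 0)) :
    (∀ (lam : ℂ) (w : ((Fin d ⊕ Fin d) ⊕ (Fin d ⊕ Fin d)) → ℂ),
      w ≠ 0 →
      (F.map (fun x : ℝ => (x : ℂ))).mulVec w = lam • w →
      (Sum.elim
          (Sum.elim (fun j => -(w (Sum.inl (Sum.inl j)))) (fun j => w (Sum.inl (Sum.inr j))))
          (Sum.elim (fun j => w (Sum.inr (Sum.inl j))) (fun j => -(w (Sum.inr (Sum.inr j)))))
          ≠ (0 : ((Fin d ⊕ Fin d) ⊕ (Fin d ⊕ Fin d)) → ℂ)) ∧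
      (F.map (fun x : ℝ => (x : ℂ))).mulVec
        (Sum.elim
          (Sum.elim (fun j => -(w (Sum.inl (Sum.inl j)))) (fun j => w (Sum.inl (Sum.inr j))))
          (Sum.elim (fun j => w (Sum.inr (Sum.inl j))) (fun j => -(w (Sum.inr (Sum.inr j))))))
        = (-lam) • (Sum.elim
          (Sum.elim (fun j => -(w (Sum.inl (Sum.inl j)))) (fun j => w (Sum.inl (Sum.inr j))))
          (Sum.elim (fun j => w (Sum.inr (Sum.inl j))) (fun j => -(w (Sum.inr (Sum.inr j))))))) ∧
    (∀ z ∈ (F.map (fun x : ℝ => (x : ℂ))).charpoly.roots,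
      -z ∈ (F.map (fun x : ℝ => (x : ℂ))).charpoly.roots) ∧
    (∀ z ∈ (F.map (fun x : ℝ => (x : ℂ))).charpoly.roots, z.re ≠ 0) ∧
    ((F.map (fun x : ℝ => (x : ℂ))).charpoly.roots.filter (fun z => 0 < z.re)).card = 2 * d ∧
    ((F.map (fun x : ℝ => (x : ℂ))).charpoly.roots.filter (fun z => z.re < 0)).card = 2 * d := by
  have hFc : F.map (fun x : ℝ => (x : ℂ)) = blockF (H.map (↑)) (M.map (↑)) := by
    rw [hF]
    exact blockF_map Complex.ofRealHom H M
  have hanti := blockF_mul_signFlip (H.map ((↑) : ℝ → ℂ)) (M.map (↑))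
  have hroots : (F.map (fun x : ℝ => (x : ℂ))).charpoly.roots.map Neg.neg =
      (F.map (fun x : ℝ => (x : ℂ))).charpoly.roots := by
    rw [← roots_charpoly_neg, hFc, charpoly_neg_of_mul_eq_neg_mul signFlip_mul_self hanti]
  have hnoimag : ∀ z ∈ (F.map (fun x : ℝ => (x : ℂ))).charpoly.roots, z.re ≠ 0 := by
    intro z hz hre
    obtain ⟨w, hw, hFw⟩ := exists_mulVec_eq_smul_of_isRoot_charpoly (isRoot_of_mem_roots hz)
    rw [hFc] at hFw
    exact hw (eq_zero_of_blockF_mulVec_eq_smul hHsymm.map_ofReal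
      (hHinv.map Complex.ofRealHom.mapMatrix) hM.map_ofReal hre hFw)
  have hcard : (F.map (fun x : ℝ => (x : ℂ))).charpoly.roots.card = 4 * d := by
    rw [IsAlgClosed.card_roots_eq_natDegree, charpoly_natDegree_eq_dim]
    simp only [Fintype.card_sum, Fintype.card_fin]
    ring
  have hneg := Multiset.card_filter_re_neg_eq_card_filter_re_pos hroots
  have hsum := Multiset.card_filter_re_pos_add_card_filter_re_neg hnoimag
  refine ⟨fun lam w hw hFw => ?_, fun z hz => hroots ▸ Multiset.mem_map_of_mem _ hz, hnoimag,
    by omega, by omega⟩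
  rw [← signFlip_mulVec, hFc]
  rw [hFc] at hFw
  refine ⟨fun h0 => hw ?_, mulVec_mulVec_eq_neg_smul_of_mul_eq_neg_mul hanti hFw⟩
  rw [← one_mulVec w, ← signFlip_mul_self, ← mulVec_mulVec, h0, mulVec_zero]

/-- Let `H` be a real symmetric invertible `d × d` matrix and `M` symmetric
positive definite. Consider the `4d × 4d` real block matrix
`F = [[0, I, 0, 0], [-H, 0, 0, 2M], [0, 0, 0, H], [0, (1/2)M, -I, 0]]`.
Then: (i) if `w` is an eigenvector of `F` (over `ℂ`) with eigenvalue `λ`, then the vector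
`(-x, v, ξ, -η)` is an eigenvector with eigenvalue `-λ`, so the spectrum of `F` is centrally
symmetric; (ii) `F` has no eigenvalue on the imaginary axis; (iii) `F` has exactly `2d`
eigenvalues (with algebraic multiplicity) in `{Re z > 0}` and exactly `2d` in `{Re z < 0}`. -/
theorem stmt_2 (d : ℕ) (hd : 1 ≤ d)
    (H M : Matrix (Fin d) (Fin d) ℝ)
    (hHsymm : H.IsHermitian) (hHinv : IsUnit H) (hM : M.PosDef)
    (F : Matrix ((Fin d ⊕ Fin d) ⊕ (Fin d ⊕ Fin d)) ((Fin d ⊕ Fin d) ⊕ (Fin d ⊕ Fin d)) ℝ)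
    (hF : F = Matrix.fromBlocks
      (Matrix.fromBlocks 0 1 (-H) 0)
      (Matrix.fromBlocks 0 0 0 ((2 : ℝ) • M))
      (Matrix.fromBlocks 0 0 0 ((1/2 : ℝ) • M))
      (Matrix.fromBlocks 0 H (-1) 0)) :
    (∀ (lam : ℂ) (w : ((Fin d ⊕ Fin d) ⊕ (Fin d ⊕ Fin d)) → ℂ),
      w ≠ 0 →
      (F.map (fun x : ℝ => (x : ℂ))).mulVec w = lam • w →
      (Sum.elim
          (Sum.elim (fun j => -(w (Sum.inl (Sum.inl j)))) (fun j => w (Sum.inl (Sum.inr j))))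
          (Sum.elim (fun j => w (Sum.inr (Sum.inl j))) (fun j => -(w (Sum.inr (Sum.inr j)))))
          ≠ (0 : ((Fin d ⊕ Fin d) ⊕ (Fin d ⊕ Fin d)) → ℂ)) ∧
      (F.map (fun x : ℝ => (x : ℂ))).mulVec
        (Sum.elim
          (Sum.elim (fun j => -(w (Sum.inl (Sum.inl j)))) (fun j => w (Sum.inl (Sum.inr j))))
          (Sum.elim (fun j => w (Sum.inr (Sum.inl j))) (fun j => -(w (Sum.inr (Sum.inr j))))))
        = (-lam) • (Sum.elim
          (Sum.elim (fun j => -(w (Sum.inl (Sum.inl j)))) (fun j => w (Sum.inl (Sum.inr j))))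
          (Sum.elim (fun j => w (Sum.inr (Sum.inl j))) (fun j => -(w (Sum.inr (Sum.inr j))))))) ∧
    (∀ z ∈ (F.map (fun x : ℝ => (x : ℂ))).charpoly.roots,
      -z ∈ (F.map (fun x : ℝ => (x : ℂ))).charpoly.roots) ∧
    (∀ z ∈ (F.map (fun x : ℝ => (x : ℂ))).charpoly.roots, z.re ≠ 0) ∧
    ((F.map (fun x : ℝ => (x : ℂ))).charpoly.roots.filter (fun z => 0 < z.re)).card = 2 * d ∧
    ((F.map (fun x : ℝ => (x : ℂ))).charpoly.roots.filter (fun z => z.re < 0)).card = 2 * d :=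
  stmt_2_general d H M hHsymm hHinv hM F hF
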